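/- arXiv:1404.0903 — 8 statements merged into one kernel-verified Lean document; each statement's English description precedes it below -/
import Mathlib

section
/- Let G be a group, H a complex Hilbert space, and σ : G → U(H) a unitary representation. Suppose there exists a nonzero vector φ ∈ H such that (i) φ is cyclic, i.e. the closed linear span of {σ(g)φ : g ∈ G} equals H, and (ii) the orthogonal projection P_φ of H onto the line ℂφ lies in the von Neumann algebra generated by σ(G), i.e. P_φ commutes with every bounded operator on H that commutes with σ(g) for all g ∈ G. Then σ is irreducible: every closed subspace of H invariant under σ(g) for all g ∈ G is either {0} or H. -/
open scoped InnerProductSpace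

/-!
The orthogonal projection `Q` onto a closed invariant subspace `K` commutes with every `σ g`,
because unitarity makes `Kᗮ` invariant as well. Hence `Q` commutes with `P`, so `Q φ = Q (P φ)`
is a multiple of `φ`; as `Q` is idempotent, `Q φ = 0` or `Q φ = φ`. Thus the cyclic vector `φ`
lies in `Kᗮ` or in `K`, and that closed invariant subspace is then everything.
-/

open Module End

section Cyclic

variable {R E G : Type*} [Semiring R] [AddCommMonoid E] [Module R E] [TopologicalSpace E]
  [ContinuousAdd E] [ContinuousConstSMul R E]

theorem Submodule.eq_top_of_cyclic_mem {M : Submodule R E} (hM : IsClosed (M : Set E))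
    (σ : G → E →L[R] E) (hinv : ∀ g, M ∈ invtSubmodule (σ g : E →ₗ[R] E)) {φ : E} (hφ : φ ∈ M)
    (hcyclic : (Submodule.span R (Set.range fun g => σ g φ)).topologicalClosure = ⊤) :
    M = ⊤ := by
  refine top_le_iff.mp (hcyclic ▸ Submodule.topologicalClosure_minimal _ ?_ hM)
  rw [Submodule.span_le]
  rintro _ ⟨g, rfl⟩
  exact hinv g hφ

end Cyclic

theorem ContinuousLinearMap.apply_eq_zero_or_eq_self_of_isIdempotentElem
    {R M : Type*} [DivisionRing R] [AddCommGroup M] [Module R M] [TopologicalSpace M]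
    {Q : M →L[R] M} (hQ : IsIdempotentElem Q) {φ : M} (hφ : φ ≠ 0) {c : R} (h : Q φ = c • φ) :
    Q φ = 0 ∨ Q φ = φ := by
  have hc : IsIdempotentElem c := smul_left_injective R hφ <| by
    calc (c * c) • φ = Q (Q φ) := by rw [h, map_smul, h, smul_smul]
      _ = c • φ := by rw [← mul_apply_eq_comp, hQ.eq, h]
  rcases IsIdempotentElem.iff_eq_zero_or_one.mp hc with rfl | rfl
  · exact .inl (by rw [h, zero_smul])
  · exact .inr (by rw [h, one_smul])

theorem Submodule.commute_starProjection {𝕜 E : Type*} [RCLike 𝕜] [NormedAddCommGroup E]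
    [InnerProductSpace 𝕜 E] (K : Submodule 𝕜 E) [K.HasOrthogonalProjection] {T : E →L[𝕜] E}
    (hK : K ∈ invtSubmodule (T : E →ₗ[𝕜] E)) (hK' : Kᗮ ∈ invtSubmodule (T : E →ₗ[𝕜] E)) :
    Commute K.starProjection T :=
  (ContinuousLinearMap.IsIdempotentElem.commute_iff K.isIdempotentElem_starProjection).mpr
    ⟨by rwa [K.range_starProjection], by rwa [K.ker_starProjection]⟩

section Unitary

variable {𝕜 E G : Type*} [RCLike 𝕜] [NormedAddCommGroup E] [InnerProductSpace 𝕜 E]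
  [CompleteSpace E] [Group G] (σ : G →* (E →L[𝕜] E))

theorem adjoint_eq_map_inv_of_inner_map_map (hunitary : ∀ g x y, ⟪σ g x, σ g y⟫_𝕜 = ⟪x, y⟫_𝕜)
    (g : G) : (σ g).adjoint = σ g⁻¹ := by
  refine ((ContinuousLinearMap.eq_adjoint_iff _ _).mpr fun x y => ?_).symm
  rw [← hunitary g, ← mul_apply_eq_comp, ← map_mul, mul_inv_cancel, map_one, one_apply_eq_self]

theorem orthogonal_mem_invtSubmodule_of_inner_map_map
    (hunitary : ∀ g x y, ⟪σ g x, σ g y⟫_𝕜 = ⟪x, y⟫_𝕜) {K : Submodule 𝕜 E}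
    (hK : ∀ g, K ∈ invtSubmodule (σ g : E →ₗ[𝕜] E)) (g : G) :
    Kᗮ ∈ invtSubmodule (σ g : E →ₗ[𝕜] E) :=
  ContinuousLinearMap.orthogonal_mem_invtSubmodule <| by
    rw [adjoint_eq_map_inv_of_inner_map_map σ hunitary]
    exact hK g⁻¹

end Unitary

/-- Irreducibility criterion: if a unitary representation `σ` of a group `G` on a complex
Hilbert space `H` admits a nonzero cyclic vector `φ` such that the orthogonal projection onto
the line `ℂφ` lies in the von Neumann algebra generated by `σ(G)` (i.e. it commutes with every
bounded operator commuting with all `σ g`), then `σ` is irreducible. -/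
theorem irreducibility_criterion
    {G : Type*} [Group G]
    {H : Type*} [NormedAddCommGroup H] [InnerProductSpace ℂ H] [CompleteSpace H]
    (σ : G →* (H →L[ℂ] H))
    (hunitary : ∀ (g : G) (x y : H), ⟪σ g x, σ g y⟫_ℂ = ⟪x, y⟫_ℂ)
    (φ : H) (hφ : φ ≠ 0)
    (hcyclic : (Submodule.span ℂ (Set.range fun g : G => σ g φ)).topologicalClosure = ⊤)
    (P : H →L[ℂ] H)
    (hP : ∀ x : H, P x = (⟪φ, x⟫_ℂ / ((‖φ‖ : ℂ) ^ 2)) • φ)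
    (hvN : ∀ T : H →L[ℂ] H, (∀ g : G, T ∘L σ g = σ g ∘L T) → T ∘L P = P ∘L T)
    (K : Submodule ℂ H) (hK : IsClosed (K : Set H))
    (hinv : ∀ g : G, ∀ x ∈ K, σ g x ∈ K) :
    K = ⊥ ∨ K = ⊤ := by
  have : CompleteSpace K := hK.completeSpace_coe
  have hKperp := orthogonal_mem_invtSubmodule_of_inner_map_map σ hunitary hinv
  have hPφ : P φ = φ := by
    rw [hP, inner_self_eq_norm_sq_to_K]
    simp [hφ]
  have hQφ : K.starProjection φ = (⟪φ, K.starProjection φ⟫_ℂ / ((‖φ‖ : ℂ) ^ 2)) • φ := by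
    have hQP := hvN K.starProjection fun g => K.commute_starProjection (hinv g) (hKperp g)
    calc K.starProjection φ = K.starProjection (P φ) := by rw [hPφ]
      _ = P (K.starProjection φ) := congr($hQP φ)
      _ = _ := hP _
  rcases ContinuousLinearMap.apply_eq_zero_or_eq_self_of_isIdempotentElem
      K.isIdempotentElem_starProjection hφ hQφ with h | h
  · exact .inl <| K.orthogonal_eq_top_iff.mp <|
      Submodule.eq_top_of_cyclic_mem K.isClosed_orthogonal σ hKperp
        (K.starProjection_apply_eq_zero_iff.mp h) hcyclic
  · exact .inr <| Submodule.eq_top_of_cyclic_mem hK σ hinv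
      (K.starProjection_eq_self_iff.mp h) hcyclic
end

section
/- Let (X,μ) be a probability space and let P be an orthogonal projection on the complex Hilbert space L²(X,μ) (i.e. P is bounded, P² = P and P* = P) such that for every φ ∈ L²(X,μ) with φ ≥ 0 μ-almost everywhere, both Pφ ≥ 0 and φ − Pφ ≥ 0 hold μ-almost everywhere. Then there exists a measurable set E ⊆ X such that Pφ = χ_E · φ for every φ ∈ L²(X,μ), where χ_E denotes the indicator function of E. -/
open MeasureTheory
open scoped InnerProductSpace ComplexOrder ENNReal

/-!
Let `p = P 1`. Since `P` is a self-adjoint idempotent, `⟪P φ, 1 - p⟫ = 0` and `⟪p, φ - P φ⟫ = 0`.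
For `φ ≥ 0` all four functions are nonnegative, so both products vanish a.e. and `P φ = p φ`.
Taking `φ = p` gives `p = p²`, so `p` is the indicator of `E = {p = 1}`. Finally, `P` and
multiplication by `χ_E` are continuous and agree on nonnegative functions, which span a dense
subspace (they contain the indicators of sets of finite measure).
-/

lemma inner_map_sub_map_eq_zero {𝕜 E : Type*} [RCLike 𝕜] [NormedAddCommGroup E]
    [InnerProductSpace 𝕜 E] {P : E →L[𝕜] E} (hidem : ∀ φ, P (P φ) = P φ)
    (hadj : ∀ φ ψ, ⟪P φ, ψ⟫_𝕜 = ⟪φ, P ψ⟫_𝕜) (φ ψ : E) : ⟪P φ, ψ - P ψ⟫_𝕜 = 0 := by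
  rw [hadj, map_sub, hidem, sub_self, inner_zero_right]

namespace MeasureTheory

variable {X 𝕜 : Type*} [MeasurableSpace X] {μ : Measure X} [RCLike 𝕜]

lemma ae_eq_zero_of_integral_eq_zero_of_nonneg {F : X → 𝕜} (hF : ∀ᵐ x ∂μ, 0 ≤ F x)
    (hint : Integrable F μ) (h : ∫ x, F x ∂μ = 0) : F =ᵐ[μ] 0 := by
  have hre : (fun x => RCLike.re (F x)) =ᵐ[μ] 0 := by
    refine (integral_eq_zero_iff_of_nonneg_ae ?_ hint.re).1 ?_
    · filter_upwards [hF] with x hx using (RCLike.nonneg_iff.1 hx).1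
    · rw [integral_re hint, h, map_zero]
  filter_upwards [hF, hre] with x hx hx'
  exact RCLike.ext (by simpa using hx') (by simpa using (RCLike.nonneg_iff.1 hx).2)

lemma indicatorConstLp_eq_smul_one {p : ℝ≥0∞} {s : Set X} (hs : MeasurableSet s) (hμs : μ s ≠ ∞)
    (c : 𝕜) : indicatorConstLp p hs hμs c = c • indicatorConstLp p hs hμs (1 : 𝕜) := by
  simp only [indicatorConstLp, ← MemLp.toLp_const_smul]
  refine MemLp.toLp_congr _ _ (.of_forall fun x => ?_)
  by_cases hx : x ∈ s <;> simp [hx]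

namespace Lp

lemma ae_mul_eq_zero_of_inner_eq_zero {f g : Lp 𝕜 2 μ} (hf : ∀ᵐ x ∂μ, 0 ≤ f x)
    (hg : ∀ᵐ x ∂μ, 0 ≤ g x) (h : ⟪f, g⟫_𝕜 = 0) : ∀ᵐ x ∂μ, f x * g x = 0 := by
  have hinner : (fun x => ⟪f x, g x⟫_𝕜) =ᵐ[μ] fun x => f x * g x := by
    filter_upwards [hf] with x hx
    rw [RCLike.inner_apply, RCLike.conj_eq_iff_im.2 (RCLike.nonneg_iff.1 hx).2, mul_comm]
  have hint : Integrable (fun x => f x * g x) μ := (L2.integrable_inner f g).congr hinner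
  have hprod : ∀ᵐ x ∂μ, 0 ≤ f x * g x := by
    filter_upwards [hf, hg] with x hx hy using mul_nonneg hx hy
  exact ae_eq_zero_of_integral_eq_zero_of_nonneg hprod hint
    (by rw [← integral_congr_ae hinner, ← L2.inner_def, h])

variable (μ) in
noncomputable def indicatorMulL {p : ℝ≥0∞} [Fact (1 ≤ p)] {E : Set X} (hE : MeasurableSet E) :
    Lp 𝕜 p μ →L[𝕜] Lp 𝕜 p μ :=
  (ContinuousLinearMap.mul 𝕜 𝕜).holderL μ ∞ p p (((memLp_top_const (1 : 𝕜)).indicator hE).toLp _)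

lemma coeFn_indicatorMulL {p : ℝ≥0∞} [Fact (1 ≤ p)] {E : Set X} (hE : MeasurableSet E)
    (φ : Lp 𝕜 p μ) :
    (indicatorMulL μ hE φ : X → 𝕜) =ᵐ[μ] fun x => E.indicator (fun _ => (1 : 𝕜)) x * φ x := by
  have h : MemLp (E.indicator fun _ => (1 : 𝕜)) ∞ μ := (memLp_top_const (1 : 𝕜)).indicator hE
  filter_upwards [ContinuousLinearMap.coeFn_holder (r := p) (ContinuousLinearMap.mul 𝕜 𝕜)
    (h.toLp _) φ, h.coeFn_toLp] with x h₁ h₂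
  rw [indicatorMulL, ContinuousLinearMap.holderL_apply_apply, h₁, ContinuousLinearMap.mul_apply',
    h₂]

lemma ae_nonneg_const [IsFiniteMeasure μ] {p : ℝ≥0∞} {c : 𝕜} (hc : 0 ≤ c) :
    ∀ᵐ x ∂μ, 0 ≤ Lp.const p μ c x := by
  filter_upwards [Lp.coeFn_const p μ c] with x hx
  rwa [hx]

lemma continuousLinearMap_ext_of_nonneg {p : ℝ≥0∞} [Fact (1 ≤ p)] (hp : p ≠ ∞) {F : Type*}
    [NormedAddCommGroup F] [NormedSpace 𝕜 F] {T S : Lp 𝕜 p μ →L[𝕜] F}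
    (h : ∀ φ : Lp 𝕜 p μ, (∀ᵐ x ∂μ, 0 ≤ φ x) → T φ = S φ) : T = S := by
  ext φ
  induction φ using Lp.induction hp with
  | indicatorConst c hs hμs =>
    have hone : ∀ᵐ x ∂μ, 0 ≤ indicatorConstLp p hs hμs.ne (1 : 𝕜) x := by
      filter_upwards [indicatorConstLp_coeFn (p := p) (hs := hs) (hμs := hμs.ne) (c := (1 : 𝕜))]
        with x hx
      rw [hx]
      exact Set.indicator_nonneg (fun _ _ => zero_le_one) x
    simp only [simpleFunc.coe_indicatorConst, indicatorConstLp_eq_smul_one hs hμs.ne c, map_smul,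
      h _ hone]
  | add _ _ _ hf hg => rw [map_add, map_add, hf, hg]
  | isClosed => exact isClosed_eq T.continuous S.continuous

end Lp

section PositiveProjection

variable [IsFiniteMeasure μ] {P : Lp 𝕜 2 μ →L[𝕜] Lp 𝕜 2 μ}

lemma ae_eq_map_const_one_mul_of_nonneg (hidem : ∀ φ, P (P φ) = P φ)
    (hadj : ∀ φ ψ, ⟪P φ, ψ⟫_𝕜 = ⟪φ, P ψ⟫_𝕜)
    (hpos : ∀ φ : Lp 𝕜 2 μ, (∀ᵐ x ∂μ, 0 ≤ φ x) →
      (∀ᵐ x ∂μ, 0 ≤ (P φ : X → 𝕜) x) ∧ (∀ᵐ x ∂μ, 0 ≤ φ x - (P φ : X → 𝕜) x))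
    {φ : Lp 𝕜 2 μ} (hφ : ∀ᵐ x ∂μ, 0 ≤ φ x) :
    (P φ : X → 𝕜) =ᵐ[μ] fun x => P (Lp.const 2 μ 1) x * φ x := by
  set one := Lp.const 2 μ (1 : 𝕜)
  have hone : ∀ᵐ x ∂μ, one x = 1 := Lp.coeFn_const 2 μ 1
  have hone_pos : ∀ᵐ x ∂μ, 0 ≤ one x := Lp.ae_nonneg_const zero_le_one
  have hsub_pos {ψ : Lp 𝕜 2 μ} (hψ : ∀ᵐ x ∂μ, 0 ≤ ψ x) :
      ∀ᵐ x ∂μ, 0 ≤ (ψ - P ψ : Lp 𝕜 2 μ) x := by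
    filter_upwards [(hpos ψ hψ).2, Lp.coeFn_sub ψ (P ψ)] with x hx hsub
    rwa [hsub]
  have h₁ := Lp.ae_mul_eq_zero_of_inner_eq_zero (hpos φ hφ).1 (hsub_pos hone_pos)
    (inner_map_sub_map_eq_zero hidem hadj φ one)
  have h₂ := Lp.ae_mul_eq_zero_of_inner_eq_zero (hpos one hone_pos).1 (hsub_pos hφ)
    (inner_map_sub_map_eq_zero hidem hadj one φ)
  filter_upwards [h₁, h₂, Lp.coeFn_sub one (P one), Lp.coeFn_sub φ (P φ), hone]
    with x h₁ h₂ h₃ h₄ h₅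
  rw [h₃, Pi.sub_apply, h₅] at h₁
  rw [h₄, Pi.sub_apply] at h₂
  linear_combination h₁ - h₂

lemma exists_measurableSet_ae_eq_indicator_mul_of_nonneg (hidem : ∀ φ, P (P φ) = P φ)
    (hadj : ∀ φ ψ, ⟪P φ, ψ⟫_𝕜 = ⟪φ, P ψ⟫_𝕜)
    (hpos : ∀ φ : Lp 𝕜 2 μ, (∀ᵐ x ∂μ, 0 ≤ φ x) →
      (∀ᵐ x ∂μ, 0 ≤ (P φ : X → 𝕜) x) ∧ (∀ᵐ x ∂μ, 0 ≤ φ x - (P φ : X → 𝕜) x)) :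
    ∃ E : Set X, MeasurableSet E ∧ ∀ φ : Lp 𝕜 2 μ, (∀ᵐ x ∂μ, 0 ≤ φ x) →
      (P φ : X → 𝕜) =ᵐ[μ] fun x => E.indicator (fun _ => (1 : 𝕜)) x * φ x := by
  set p := P (Lp.const 2 μ (1 : 𝕜))
  have hp_pos : ∀ᵐ x ∂μ, 0 ≤ p x := (hpos _ (Lp.ae_nonneg_const zero_le_one)).1
  have hp01 : ∀ᵐ x ∂μ, p x = 0 ∨ p x = 1 := by
    filter_upwards [ae_eq_map_const_one_mul_of_nonneg hidem hadj hpos hp_pos] with x hx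
    rw [hidem] at hx
    rw [← sub_eq_zero (b := (1 : 𝕜)), ← mul_eq_zero]
    linear_combination -hx
  refine ⟨p ⁻¹' {1}, (Lp.stronglyMeasurable p).measurable (measurableSet_singleton 1),
    fun φ hφ => ?_⟩
  filter_upwards [ae_eq_map_const_one_mul_of_nonneg hidem hadj hpos hφ, hp01] with x hPφ hpx
  rw [hPφ]
  rcases hpx with h | h
  · rw [Set.indicator_of_notMem (by simp [h]), h]
  · rw [Set.indicator_of_mem (by exact h), h]

end PositiveProjection

end MeasureTheory

/-- An orthogonal projection `P` on `L²(X,μ)` (μ a probability measure) such that both `P`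
and `I - P` preserve positivity is the projection onto `L²(E,μ)` for some measurable set `E`,
i.e. `P` acts as multiplication by the indicator function of `E`. -/
theorem positive_projection_is_indicator
    {X : Type*} [MeasurableSpace X] (μ : Measure X) [IsProbabilityMeasure μ]
    (P : Lp ℂ 2 μ →L[ℂ] Lp ℂ 2 μ)
    (hidem : ∀ φ : Lp ℂ 2 μ, P (P φ) = P φ)
    (hadj : ∀ φ ψ : Lp ℂ 2 μ, ⟪P φ, ψ⟫_ℂ = ⟪φ, P ψ⟫_ℂ)
    (hpos : ∀ φ : Lp ℂ 2 μ, (∀ᵐ x ∂μ, 0 ≤ φ x) →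
      (∀ᵐ x ∂μ, 0 ≤ (P φ : X → ℂ) x) ∧ (∀ᵐ x ∂μ, 0 ≤ φ x - (P φ : X → ℂ) x)) :
    ∃ E : Set X, MeasurableSet E ∧
      ∀ φ : Lp ℂ 2 μ, (P φ : X → ℂ) =ᵐ[μ] fun x => E.indicator (fun _ => (1 : ℂ)) x * φ x := by
  obtain ⟨E, hE, hPE⟩ := exists_measurableSet_ae_eq_indicator_mul_of_nonneg hidem hadj hpos
  have hP : P = Lp.indicatorMulL μ hE :=
    Lp.continuousLinearMap_ext_of_nonneg ENNReal.ofNat_ne_top fun φ hφ =>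
      Lp.ext ((hPE φ hφ).trans (Lp.coeFn_indicatorMulL hE φ).symm)
  exact ⟨E, hE, fun φ => hP ▸ Lp.coeFn_indicatorMulL hE φ⟩
end

section
/- Let (Z,ρ) be a metric space of diameter at most 1, let D > 0, c > 0, C > 0, and let μ be a Borel probability measure on Z that is Ahlfors regular of dimension D with constants c, C, i.e. c·r^D ≤ μ(B(ξ,r)) ≤ C·r^D for every ξ ∈ Z and every 0 < r ≤ 1, where B(ξ,r) is the closed ball. Then there exist constants c', C' > 0, depending only on c, C and D, such that for every x ∈ Z and every T ≥ 1: c'·(1 + log T) ≤ ∫_Z min(T, ρ(x,ξ)^{−D}) dμ(ξ) ≤ C'·(1 + log T). -/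
/-!
By the layer-cake formula, `∫ min(T, ρ(x,ξ)^(-D)) dμ(ξ) = ∫₀ᵀ μ(B(x, t^(-1/D))) dt`, and Ahlfors
regularity makes this integrand comparable to `min(1, 1/t)`, whose integral over `(0, T]` is
`1 + log T`. The superlevel set `{ξ | t ≤ ρ(x,ξ)^(-D)}` is the ball minus its center (because
`0 ^ (-D) = 0`), which is harmless: the upper bound forces `μ {x} = 0`.
-/

open MeasureTheory Metric Set Filter Topology Real

section MinOneInv

variable {T a b : ℝ}

theorem integrableOn_min_one_inv_Ioc : IntegrableOn (fun t : ℝ => min 1 t⁻¹) (Ioc 0 T) :=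
  Measure.integrableOn_of_bounded (by simp) (by fun_prop) (M := 1) <|
    (ae_restrict_iff' measurableSet_Ioc).2 <| ae_of_all _ fun t ht => by
      rw [Real.norm_of_nonneg (le_min zero_le_one (inv_nonneg.2 ht.1.le))]
      exact min_le_left _ _

theorem integral_Ioc_min_one_inv (hT : 1 ≤ T) : ∫ t in Ioc 0 T, min 1 t⁻¹ = 1 + log T := by
  have h₁ : EqOn (fun t : ℝ => min 1 t⁻¹) 1 (Ioc 0 1) := fun t ht =>
    min_eq_left ((one_le_inv₀ ht.1).2 ht.2)
  have h₂ : EqOn (fun t : ℝ => min 1 t⁻¹) (·⁻¹) (Ioc 1 T) := fun t ht =>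
    min_eq_right (inv_le_one_of_one_le₀ ht.1.le)
  have hlog : ∫ t in Ioc 1 T, t⁻¹ = log T := by
    rw [← intervalIntegral.integral_of_le hT,
      integral_inv (notMem_uIcc_of_lt zero_lt_one (zero_lt_one.trans_le hT)), div_one]
  rw [← Ioc_union_Ioc_eq_Ioc zero_le_one hT,
    setIntegral_union (Ioc_disjoint_Ioc_of_le le_rfl) measurableSet_Ioc
      integrableOn_min_one_inv_Ioc
      (integrableOn_min_one_inv_Ioc.mono_set (Ioc_subset_Ioc_left zero_le_one)),
    setIntegral_congr_fun measurableSet_Ioc h₁, setIntegral_congr_fun measurableSet_Ioc h₂, hlog]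
  simp

theorem mul_one_add_log_le_setIntegral {g : ℝ → ℝ} (hT : 1 ≤ T) (hg : IntegrableOn g (Ioc 0 T))
    (hlow : ∀ t ∈ Ioc 0 T, a * min 1 t⁻¹ ≤ g t) : a * (1 + log T) ≤ ∫ t in Ioc 0 T, g t := by
  rw [← integral_Ioc_min_one_inv hT, ← integral_const_mul]
  exact setIntegral_mono_on (integrableOn_min_one_inv_Ioc.const_mul a) hg measurableSet_Ioc hlow

theorem setIntegral_le_mul_one_add_log {g : ℝ → ℝ} (hT : 1 ≤ T) (hg : IntegrableOn g (Ioc 0 T))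
    (hup : ∀ t ∈ Ioc 0 T, g t ≤ b * min 1 t⁻¹) : ∫ t in Ioc 0 T, g t ≤ b * (1 + log T) := by
  rw [← integral_Ioc_min_one_inv hT, ← integral_const_mul]
  exact setIntegral_mono_on hg (integrableOn_min_one_inv_Ioc.const_mul b) measurableSet_Ioc hup

end MinOneInv

section AhlforsRegular

variable {Z : Type*} [MetricSpace Z] {x : Z} {D c C t T : ℝ}

theorem setOf_le_dist_rpow_neg (hD : 0 < D) (ht : 0 < t) :
    {ξ | t ≤ dist x ξ ^ (-D)} = closedBall x (t⁻¹ ^ D⁻¹) \ {x} := by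
  ext ξ
  rcases eq_or_ne ξ x with rfl | hξ
  · simp [zero_rpow (neg_ne_zero.2 hD.ne'), ht.not_ge]
  have hd : 0 < dist x ξ := dist_pos.2 hξ.symm
  rw [mem_ofPred_eq, Set.mem_sdiff, mem_closedBall, dist_comm ξ x,
    le_rpow_inv_iff_of_pos hd.le (inv_nonneg.2 ht.le) hD, rpow_neg hd.le,
    le_inv_comm₀ ht (rpow_pos_of_pos hd D)]
  simp [hξ]

variable [MeasurableSpace Z] {μ : Measure Z}

theorem measure_singleton_eq_zero_of_measureReal_closedBall_le [IsFiniteMeasure μ] (hD : 0 < D)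
    (hup : ∀ r, 0 < r → r ≤ 1 → μ.real (closedBall x r) ≤ C * r ^ D) : μ {x} = 0 := by
  have hlim : Tendsto (fun r : ℝ => C * r ^ D) (𝓝[>] 0) (𝓝 0) := by
    simpa [zero_rpow hD.ne'] using
      ((continuousAt_rpow_const 0 D (Or.inr hD.le)).const_mul C).tendsto.mono_left
        nhdsWithin_le_nhds
  have hle : ∀ᶠ r in 𝓝[>] (0 : ℝ), μ.real {x} ≤ C * r ^ D := by
    filter_upwards [Ioc_mem_nhdsGT zero_lt_one] with r ⟨hr0, hr1⟩
    exact (measureReal_mono (singleton_subset_iff.2 (mem_closedBall_self hr0.le))).trans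
      (hup r hr0 hr1)
  exact (measureReal_eq_zero_iff).1 ((ge_of_tendsto hlim hle).antisymm measureReal_nonneg)

theorem mul_min_one_inv_le_measureReal_closedBall [IsFiniteMeasure μ] (hD : 0 < D)
    (hlow : ∀ r, 0 < r → r ≤ 1 → c * r ^ D ≤ μ.real (closedBall x r)) (ht : 0 < t) :
    c * min 1 t⁻¹ ≤ μ.real (closedBall x (t⁻¹ ^ D⁻¹)) := by
  rcases le_or_gt t 1 with ht1 | ht1
  · have hr : 1 ≤ t⁻¹ ^ D⁻¹ := one_le_rpow ((one_le_inv₀ ht).2 ht1) (inv_nonneg.2 hD.le)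
    calc c * min 1 t⁻¹ = c * 1 ^ D := by rw [min_eq_left ((one_le_inv₀ ht).2 ht1), one_rpow]
      _ ≤ μ.real (closedBall x 1) := hlow 1 one_pos le_rfl
      _ ≤ μ.real (closedBall x (t⁻¹ ^ D⁻¹)) := measureReal_mono (closedBall_subset_closedBall hr)
  · have hr : t⁻¹ ^ D⁻¹ ≤ 1 := rpow_le_one (inv_nonneg.2 ht.le) (inv_le_one_of_one_le₀ ht1.le)
      (inv_nonneg.2 hD.le)
    calc c * min 1 t⁻¹ = c * (t⁻¹ ^ D⁻¹) ^ D := by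
          rw [min_eq_right (inv_le_one_of_one_le₀ ht1.le),
            rpow_inv_rpow (inv_nonneg.2 ht.le) hD.ne']
      _ ≤ μ.real (closedBall x (t⁻¹ ^ D⁻¹)) := hlow _ (by positivity) hr

theorem measureReal_closedBall_le_mul_min_one_inv [IsProbabilityMeasure μ] (hD : 0 < D)
    (hup : ∀ r, 0 < r → r ≤ 1 → μ.real (closedBall x r) ≤ C * r ^ D) (ht : 0 < t) :
    μ.real (closedBall x (t⁻¹ ^ D⁻¹)) ≤ max 1 C * min 1 t⁻¹ := by
  rcases le_or_gt t 1 with ht1 | ht1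
  · rw [min_eq_left ((one_le_inv₀ ht).2 ht1), mul_one]
    exact measureReal_le_one.trans (le_max_left _ _)
  · have hr : t⁻¹ ^ D⁻¹ ≤ 1 := rpow_le_one (inv_nonneg.2 ht.le) (inv_le_one_of_one_le₀ ht1.le)
      (inv_nonneg.2 hD.le)
    calc μ.real (closedBall x (t⁻¹ ^ D⁻¹)) ≤ C * (t⁻¹ ^ D⁻¹) ^ D := hup _ (by positivity) hr
      _ = C * min 1 t⁻¹ := by
          rw [min_eq_right (inv_le_one_of_one_le₀ ht1.le),
            rpow_inv_rpow (inv_nonneg.2 ht.le) hD.ne']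
      _ ≤ max 1 C * min 1 t⁻¹ := by
          gcongr
          exact le_max_right _ _

theorem integrableOn_measureReal_closedBall_inv_rpow [IsFiniteMeasure μ] {s : Set ℝ}
    (hs : volume s ≠ ⊤) : IntegrableOn (fun t => μ.real (closedBall x (t⁻¹ ^ D⁻¹))) s := by
  have hmono : Monotone fun r => μ (closedBall x r) := fun r r' h =>
    measure_mono (closedBall_subset_closedBall h)
  refine Measure.integrableOn_of_bounded hs ?_ (M := μ.real univ) (ae_of_all _ fun t => ?_)
  · exact (hmono.measurable.comp (by fun_prop)).ennreal_toReal.aestronglyMeasurable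
  · rw [Real.norm_of_nonneg measureReal_nonneg]
    exact measureReal_mono (subset_univ _)

theorem integral_min_dist_rpow_neg_eq_setIntegral [IsFiniteMeasure μ] [OpensMeasurableSpace Z]
    (hD : 0 < D) (hx : μ {x} = 0) (hT : 0 ≤ T) :
    ∫ ξ, min T (dist x ξ ^ (-D)) ∂μ = ∫ t in Ioc 0 T, μ.real (closedBall x (t⁻¹ ^ D⁻¹)) := by
  have hnonneg (ξ : Z) : 0 ≤ min T (dist x ξ ^ (-D)) := le_min hT (rpow_nonneg dist_nonneg _)
  have hle (ξ : Z) : min T (dist x ξ ^ (-D)) ≤ T := min_le_left _ _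
  have hmeas : Measurable fun ξ => min T (dist x ξ ^ (-D)) :=
    measurable_const.min ((continuous_const.dist continuous_id).measurable.pow_const _)
  have hint : Integrable (fun ξ => min T (dist x ξ ^ (-D))) μ :=
    .of_bound hmeas.aestronglyMeasurable T <| ae_of_all _ fun ξ => by
      simpa only [Real.norm_of_nonneg (hnonneg ξ)] using hle ξ
  rw [hint.integral_eq_integral_Ioc_meas_le (ae_of_all _ hnonneg) (ae_of_all _ hle)]
  refine setIntegral_congr_fun measurableSet_Ioc fun t ht => ?_
  simp only [le_min_iff, ht.2, true_and, setOf_le_dist_rpow_neg hD ht.1, Measure.real,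
    measure_sdiff_null hx]

end AhlforsRegular

theorem integral_min_rpow_asymp_log_general
    (D c C : ℝ) (hD : 0 < D) (hc : 0 < c) :
    ∃ c' C' : ℝ, 0 < c' ∧ 0 < C' ∧
      ∀ (Z : Type) [MetricSpace Z] [MeasurableSpace Z] [BorelSpace Z]
        (μ : Measure Z) [IsProbabilityMeasure μ],
        diam (Set.univ : Set Z) ≤ 1 →
        (∀ (ξ : Z) (r : ℝ), 0 < r → r ≤ 1 →
          c * r ^ D ≤ (μ (closedBall ξ r)).toReal ∧
            (μ (closedBall ξ r)).toReal ≤ C * r ^ D) →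
        ∀ (x : Z) (T : ℝ), 1 ≤ T →
          c' * (1 + Real.log T) ≤ ∫ ξ, min T (dist x ξ ^ (-D)) ∂μ ∧
            ∫ ξ, min T (dist x ξ ^ (-D)) ∂μ ≤ C' * (1 + Real.log T) := by
  refine ⟨c, max 1 C, hc, zero_lt_one.trans_le (le_max_left _ _), ?_⟩
  intro Z _ _ _ μ _ _ hreg x T hT
  have hlow r h0 h1 := (hreg x r h0 h1).1
  have hup r h0 h1 := (hreg x r h0 h1).2
  have hx := measure_singleton_eq_zero_of_measureReal_closedBall_le hD hup
  rw [integral_min_dist_rpow_neg_eq_setIntegral hD hx (zero_le_one.trans hT)]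
  have hint : IntegrableOn (fun t => μ.real (closedBall x (t⁻¹ ^ D⁻¹))) (Ioc 0 T) :=
    integrableOn_measureReal_closedBall_inv_rpow (by simp)
  exact ⟨mul_one_add_log_le_setIntegral hT hint fun t ht =>
      mul_min_one_inv_le_measureReal_closedBall hD hlow ht.1,
    setIntegral_le_mul_one_add_log hT hint fun t ht =>
      measureReal_closedBall_le_mul_min_one_inv hD hup ht.1⟩

/-- For an Ahlfors regular probability measure `μ` of dimension `D` on a metric space of
diameter at most 1, the integral `∫ min(T, ρ(x,ξ)^(-D)) dμ(ξ)` is comparable to `1 + log T`,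
uniformly in `x` and `T ≥ 1`, with comparison constants depending only on `c`, `C` and `D`. -/
theorem integral_min_rpow_asymp_log
    (D c C : ℝ) (hD : 0 < D) (hc : 0 < c) (hC : 0 < C) :
    ∃ c' C' : ℝ, 0 < c' ∧ 0 < C' ∧
      ∀ (Z : Type) [MetricSpace Z] [MeasurableSpace Z] [BorelSpace Z]
        (μ : Measure Z) [IsProbabilityMeasure μ],
        diam (Set.univ : Set Z) ≤ 1 →
        (∀ (ξ : Z) (r : ℝ), 0 < r → r ≤ 1 →
          c * r ^ D ≤ (μ (closedBall ξ r)).toReal ∧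
            (μ (closedBall ξ r)).toReal ≤ C * r ^ D) →
        ∀ (x : Z) (T : ℝ), 1 ≤ T →
          c' * (1 + Real.log T) ≤ ∫ ξ, min T (dist x ξ ^ (-D)) ∂μ ∧
            ∫ ξ, min T (dist x ξ ^ (-D)) ∂μ ≤ C' * (1 + Real.log T) :=
  integral_min_rpow_asymp_log_general D c C hD hc
end

section
/- Let (Z,ρ) be a metric space, μ a Borel probability measure on Z, x ∈ Z, D > 1 and M > 0. Let f : Z → [0,∞) be μ-integrable with ∫_Z f dμ = 1 and f(ξ) ≤ M·ρ(x,ξ)^{−D} for μ-almost every ξ ∈ Z. Then for every Lipschitz function ψ : Z → ℝ with Lipschitz constant λ one has |∫_Z f·ψ dμ − ψ(x)| ≤ 2·λ·M^{1/D}. -/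
/-!
Put `r = M ^ (1/D)`. Pointwise `f(ξ)·ρ(x,ξ) ≤ r·(f(ξ) + 1)`: where `ρ(x,ξ) ≤ r` this is
clear, and where `ρ(x,ξ) > r` the decay bound gives
`f(ξ)·ρ(x,ξ) ≤ M·ρ(x,ξ)^(1-D) ≤ M·r^(1-D) = r`.
Integrating, the first moment `∫ f(ξ)·ρ(x,ξ) dμ` is at most `2r`, and
`|∫ f·ψ dμ − ψ(x)| = |∫ f(ξ)·(ψ(ξ) − ψ(x)) dμ| ≤ λ·∫ f(ξ)·ρ(x,ξ) dμ`.
-/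

open MeasureTheory

theorem Real.mul_le_rpow_one_div_mul_add_one_of_le_mul_rpow_neg {a t D M : ℝ} (ha : 0 ≤ a)
    (hD : 1 ≤ D) (hM : 0 < M) (h : a ≤ M * t ^ (-D)) : a * t ≤ M ^ (1 / D) * (a + 1) := by
  set r := M ^ (1 / D)
  have hr : 0 < r := Real.rpow_pos_of_pos hM _
  rcases le_or_gt t r with ht | ht
  · nlinarith [mul_le_mul_of_nonneg_left ht ha]
  · have ht0 : 0 < t := hr.trans ht
    have hrD : r ^ D = M := by
      rw [← Real.rpow_mul hM.le, one_div_mul_cancel (by linarith : (0 : ℝ) < D).ne',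
        Real.rpow_one]
    have hat : a * t ≤ r :=
      calc a * t ≤ M * t ^ (-D) * t := mul_le_mul_of_nonneg_right h ht0.le
        _ = M * t ^ (1 - D) := by
          rw [mul_assoc, ← Real.rpow_add_one ht0.ne', neg_add_eq_sub]
        _ ≤ M * r ^ (1 - D) :=
          mul_le_mul_of_nonneg_left (Real.rpow_le_rpow_of_nonpos hr ht.le (by linarith)) hM.le
        _ = r := by
          rw [Real.rpow_sub hr, Real.rpow_one, hrD]
          field_simp
    nlinarith

section FirstMoment

variable {Z : Type*} [PseudoMetricSpace Z] [MeasurableSpace Z]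
  {μ : Measure Z} {f : Z → ℝ} {x : Z} {D M : ℝ}

theorem ae_mul_dist_le_of_le_mul_rpow_neg (hf0 : 0 ≤ᵐ[μ] f)
    (hfM : ∀ᵐ ξ ∂μ, f ξ ≤ M * dist x ξ ^ (-D)) (hD : 1 ≤ D) (hM : 0 < M) :
    ∀ᵐ ξ ∂μ, f ξ * dist x ξ ≤ M ^ (1 / D) * (f ξ + 1) := by
  filter_upwards [hf0, hfM] with ξ h0 hξ
  exact Real.mul_le_rpow_one_div_mul_add_one_of_le_mul_rpow_neg h0 hD hM hξ

variable [OpensMeasurableSpace Z] [IsFiniteMeasure μ]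

theorem integrable_mul_dist_of_le_mul_rpow_neg (hf : Integrable f μ) (hf0 : 0 ≤ᵐ[μ] f)
    (hfM : ∀ᵐ ξ ∂μ, f ξ ≤ M * dist x ξ ^ (-D)) (hD : 1 ≤ D) (hM : 0 < M) :
    Integrable (fun ξ => f ξ * dist x ξ) μ := by
  refine ((hf.add (integrable_const 1)).const_mul (M ^ (1 / D))).mono'
    (hf.aestronglyMeasurable.mul (continuous_const.dist continuous_id).aestronglyMeasurable) ?_
  filter_upwards [hf0, ae_mul_dist_le_of_le_mul_rpow_neg hf0 hfM hD hM] with ξ h0 hξ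
  rwa [Real.norm_of_nonneg (mul_nonneg h0 dist_nonneg)]

theorem integral_mul_dist_le_of_le_mul_rpow_neg (hf : Integrable f μ) (hf0 : 0 ≤ᵐ[μ] f)
    (hfM : ∀ᵐ ξ ∂μ, f ξ ≤ M * dist x ξ ^ (-D)) (hD : 1 ≤ D) (hM : 0 < M) :
    ∫ ξ, f ξ * dist x ξ ∂μ ≤ M ^ (1 / D) * (∫ ξ, f ξ ∂μ + μ.real Set.univ) := by
  calc ∫ ξ, f ξ * dist x ξ ∂μ ≤ ∫ ξ, M ^ (1 / D) * (f ξ + 1) ∂μ :=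
        integral_mono_ae (integrable_mul_dist_of_le_mul_rpow_neg hf hf0 hfM hD hM)
          ((hf.add (integrable_const 1)).const_mul _)
          (ae_mul_dist_le_of_le_mul_rpow_neg hf0 hfM hD hM)
    _ = M ^ (1 / D) * (∫ ξ, f ξ ∂μ + μ.real Set.univ) := by
        rw [integral_const_mul, integral_add hf (integrable_const 1), integral_const, smul_eq_mul,
          mul_one]

end FirstMoment

theorem LipschitzWith.abs_integral_mul_sub_le {Z : Type*} [PseudoMetricSpace Z]
    [MeasurableSpace Z] [OpensMeasurableSpace Z] {μ : Measure Z} {f ψ : Z → ℝ} {K : NNReal}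
    (hψ : LipschitzWith K ψ) (x : Z) (hf : Integrable f μ) (hf0 : 0 ≤ᵐ[μ] f)
    (hf1 : ∫ ξ, f ξ ∂μ = 1) (hfd : Integrable (fun ξ => f ξ * dist x ξ) μ) :
    |∫ ξ, f ξ * ψ ξ ∂μ - ψ x| ≤ K * ∫ ξ, f ξ * dist x ξ ∂μ := by
  have hbound : ∀ᵐ ξ ∂μ, |f ξ * (ψ ξ - ψ x)| ≤ K * (f ξ * dist x ξ) := by
    filter_upwards [hf0] with ξ h0
    rw [abs_mul, abs_of_nonneg h0, ← Real.dist_eq, dist_comm x, mul_left_comm]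
    exact mul_le_mul_of_nonneg_left (hψ.dist_le_mul ξ x) h0
  have hdiff : Integrable (fun ξ => f ξ * (ψ ξ - ψ x)) μ :=
    (hfd.const_mul K).mono'
      (hf.aestronglyMeasurable.mul (hψ.continuous.sub continuous_const).aestronglyMeasurable)
      hbound
  have hsplit : ∫ ξ, f ξ * ψ ξ ∂μ = ∫ ξ, f ξ * (ψ ξ - ψ x) ∂μ + ψ x :=
    calc ∫ ξ, f ξ * ψ ξ ∂μ = ∫ ξ, f ξ * (ψ ξ - ψ x) + f ξ * ψ x ∂μ := by
          congr with ξ; ring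
      _ = _ := by rw [integral_add hdiff (hf.mul_const _), integral_mul_const, hf1, one_mul]
  calc |∫ ξ, f ξ * ψ ξ ∂μ - ψ x| = |∫ ξ, f ξ * (ψ ξ - ψ x) ∂μ| := by
        rw [hsplit, add_sub_cancel_right]
    _ ≤ ∫ ξ, |f ξ * (ψ ξ - ψ x)| ∂μ := abs_integral_le_integral_abs
    _ ≤ ∫ ξ, K * (f ξ * dist x ξ) ∂μ :=
        integral_mono_ae hdiff.abs (hfd.const_mul _) hbound
    _ = K * ∫ ξ, f ξ * dist x ξ ∂μ := integral_const_mul _ _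

/-- If `f ≥ 0` is a probability density on `(Z,μ)` satisfying `f(ξ) ≤ M·ρ(x,ξ)^(-D)` a.e.
with `D > 1`, then for any `λ`-Lipschitz function `ψ` one has
`|∫ f·ψ dμ − ψ(x)| ≤ 2·λ·M^(1/D)`. -/
theorem lipschitz_eval_approx
    {Z : Type*} [MetricSpace Z] [MeasurableSpace Z] [BorelSpace Z]
    (μ : Measure Z) [IsProbabilityMeasure μ]
    (x : Z) (D M : ℝ) (hD : 1 < D) (hM : 0 < M)
    (f : Z → ℝ) (hf_int : Integrable f μ)
    (hf_nonneg : ∀ᵐ ξ ∂μ, 0 ≤ f ξ)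
    (hf_one : ∫ ξ, f ξ ∂μ = 1)
    (hf_bound : ∀ᵐ ξ ∂μ, f ξ ≤ M * dist x ξ ^ (-D))
    (ψ : Z → ℝ) (lam : ℝ) (hlam : 0 ≤ lam)
    (hψ : ∀ ξ η : Z, |ψ ξ - ψ η| ≤ lam * dist ξ η) :
    |(∫ ξ, f ξ * ψ ξ ∂μ) - ψ x| ≤ 2 * lam * M ^ (1 / D) := by
  have hψ' : LipschitzWith lam.toNNReal ψ :=
    .of_dist_le_mul fun ξ η => by rw [Real.coe_toNNReal lam hlam, Real.dist_eq]; exact hψ ξ η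
  have hfd := integrable_mul_dist_of_le_mul_rpow_neg hf_int hf_nonneg hf_bound hD.le hM
  have hmoment := integral_mul_dist_le_of_le_mul_rpow_neg hf_int hf_nonneg hf_bound hD.le hM
  rw [hf_one, probReal_univ] at hmoment
  calc |(∫ ξ, f ξ * ψ ξ ∂μ) - ψ x| ≤ lam * ∫ ξ, f ξ * dist x ξ ∂μ := by
        simpa only [Real.coe_toNNReal lam hlam] using
          hψ'.abs_integral_mul_sub_le x hf_int hf_nonneg hf_one hfd
    _ ≤ lam * (M ^ (1 / D) * (1 + 1)) := by gcongr
    _ = 2 * lam * M ^ (1 / D) := by ring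
end

section
/- Let (Z,ρ) be a metric space, D > 0, C > 0, let N be a positive integer and let x₁, …, x_N ∈ Z (not necessarily distinct) be points such that for every η ∈ Z and every real s with N^{−1/D} ≤ s ≤ 1 one has #{i ∈ {1,…,N} : ρ(x_i,η) ≤ s} ≤ C·N·s^D. Then for every η ∈ Z: Σ_{i=1}^N min(N, ρ(x_i,η)^{−D}) ≤ (1+C)·N·(1 + log N). -/
/-!
Layer cake: `min N a ≤ 1 + #{k ∈ [1, N] | k ≤ a}`, so after exchanging the two sums the left-hand
side is at most `N + Σ_{k=1}^N #{i | k ≤ ρ(x_i,η)^(-D)}`. A point counted at level `k` lies in the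
ball of radius `k^(-1/D) ∈ [N^(-1/D), 1]` about `η`, so the counting hypothesis bounds the `k`-th
term by `C N / k`, and the harmonic bound `H_N ≤ 1 + log N` finishes the proof.
-/

open Finset

-- Writing `(k : ℝ)` in the filter would make `k` real; `(k : ℕ)` keeps it natural and `≤` casts it.
theorem min_le_one_add_card_filter_natCast_le (N : ℕ) (a : ℝ) :
    min (N : ℝ) a ≤ 1 + #{k ∈ Icc 1 N | (k : ℕ) ≤ a} := by
  have hfilter : {k ∈ Icc 1 N | (k : ℕ) ≤ a} = Icc 1 (min N ⌊a⌋₊) := by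
    ext k
    simp only [mem_filter, mem_Icc, le_min_iff]
    constructor
    · rintro ⟨⟨hk1, hkN⟩, hka⟩
      exact ⟨hk1, hkN, (Nat.le_floor_iff' (by omega)).2 hka⟩
    · rintro ⟨hk1, hkN, hka⟩
      exact ⟨⟨hk1, hkN⟩, (Nat.le_floor_iff' (by omega)).1 hka⟩
  rw [hfilter, Nat.card_Icc, Nat.add_sub_cancel, Nat.cast_min]
  calc min (N : ℝ) a ≤ min (N : ℝ) (⌊a⌋₊ + 1) := min_le_min_left _ (Nat.lt_floor_add_one a).le
    _ ≤ 1 + min (N : ℝ) ⌊a⌋₊ := by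
      rw [← min_add_add_left]
      exact min_le_min (by linarith) (by linarith)

theorem sum_min_natCast_le_card_add_sum_card {ι : Type*} (s : Finset ι) (a : ι → ℝ) (N : ℕ) :
    ∑ i ∈ s, min (N : ℝ) (a i) ≤ #s + ∑ k ∈ Icc 1 N, (#{i ∈ s | (k : ℝ) ≤ a i} : ℝ) := by
  calc ∑ i ∈ s, min (N : ℝ) (a i)
      ≤ ∑ i ∈ s, (1 + (#{k ∈ Icc 1 N | (k : ℕ) ≤ a i} : ℝ)) :=
        sum_le_sum fun i _ ↦ min_le_one_add_card_filter_natCast_le N (a i)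
    _ = #s + ∑ k ∈ Icc 1 N, (#{i ∈ s | (k : ℝ) ≤ a i} : ℝ) := by
      rw [sum_add_distrib, sum_const, nsmul_one]
      exact_mod_cast congrArg _
        (sum_card_bipartiteAbove_eq_sum_card_bipartiteBelow (fun i (k : ℕ) ↦ (k : ℝ) ≤ a i))

theorem Real.le_rpow_neg_one_div_of_le_rpow_neg {D r t : ℝ} (hD : 0 < D) (hr : 0 ≤ r)
    (ht : 0 < t) (h : t ≤ r ^ (-D)) : r ≤ t ^ (-(1 / D)) := by
  have hexp : -(1 / D) ≤ 0 := by simp [hD.le]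
  calc r = (r ^ (-D)) ^ (-(1 / D)) := by
        rw [← Real.rpow_mul hr, neg_mul_neg, mul_one_div_cancel hD.ne', Real.rpow_one]
    _ ≤ t ^ (-(1 / D)) := Real.rpow_le_rpow_of_nonpos ht h hexp

theorem card_le_rpow_neg_le_mul_inv {ι : Type*} (s : Finset ι) (r : ι → ℝ) (hr : ∀ i, 0 ≤ r i)
    {D B M t : ℝ} (hD : 0 < D) (ht : 1 ≤ t) (htM : t ≤ M)
    (hcount : ∀ u, M ^ (-(1 / D)) ≤ u → u ≤ 1 → (#{i ∈ s | r i ≤ u} : ℝ) ≤ B * u ^ D) :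
    (#{i ∈ s | t ≤ r i ^ (-D)} : ℝ) ≤ B * t⁻¹ := by
  have ht0 : 0 < t := one_pos.trans_le ht
  have hexp : -(1 / D) ≤ 0 := by simp [hD.le]
  have hsub : ({i ∈ s | t ≤ r i ^ (-D)} : Finset ι) ⊆ {i ∈ s | r i ≤ t ^ (-(1 / D))} :=
    monotone_filter_right s fun i _ ↦ Real.le_rpow_neg_one_div_of_le_rpow_neg hD (hr i) ht0
  calc (#{i ∈ s | t ≤ r i ^ (-D)} : ℝ) ≤ #{i ∈ s | r i ≤ t ^ (-(1 / D))} := by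
        exact_mod_cast card_le_card hsub
    _ ≤ B * (t ^ (-(1 / D))) ^ D :=
        hcount _ (Real.rpow_le_rpow_of_nonpos ht0 htM hexp)
          (Real.rpow_le_one_of_one_le_of_nonpos ht hexp)
    _ = B * t⁻¹ := by
        rw [← Real.rpow_mul ht0.le, neg_mul, one_div_mul_cancel hD.ne', Real.rpow_neg_one]

theorem sum_min_rpow_le_general
    {Z : Type*} [MetricSpace Z] (D C : ℝ) (hD : 0 < D) (hC : 0 < C)
    (N : ℕ) (x : Fin N → Z)
    (hcount : ∀ (η : Z) (s : ℝ), (N : ℝ) ^ (-(1 / D)) ≤ s → s ≤ 1 →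
      (Nat.card {i : Fin N // dist (x i) η ≤ s} : ℝ) ≤ C * N * s ^ D) :
    ∀ η : Z, ∑ i : Fin N, min (N : ℝ) (dist (x i) η ^ (-D)) ≤
      (1 + C) * N * (1 + Real.log N) := by
  intro η
  have hcount' : ∀ u, (N : ℝ) ^ (-(1 / D)) ≤ u → u ≤ 1 →
      (#{i | dist (x i) η ≤ u} : ℝ) ≤ C * N * u ^ D := by
    simpa only [Nat.card_eq_fintype_card, Fintype.card_subtype] using hcount η
  have hharmonic : ∑ k ∈ Icc 1 N, (k : ℝ)⁻¹ ≤ 1 + Real.log N := by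
    simpa only [harmonic_eq_sum_Icc, Rat.cast_sum, Rat.cast_inv, Rat.cast_natCast]
      using harmonic_le_one_add_log N
  calc ∑ i : Fin N, min (N : ℝ) (dist (x i) η ^ (-D))
      ≤ N + ∑ k ∈ Icc 1 N, (#{i | (k : ℝ) ≤ dist (x i) η ^ (-D)} : ℝ) := by
        simpa using sum_min_natCast_le_card_add_sum_card univ (fun i ↦ dist (x i) η ^ (-D)) N
    _ ≤ N + ∑ k ∈ Icc 1 N, C * N * (k : ℝ)⁻¹ := by
        gcongr with k hk
        obtain ⟨hk1, hkN⟩ := mem_Icc.1 hk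
        exact card_le_rpow_neg_le_mul_inv univ _ (fun _ ↦ dist_nonneg) hD
          (by exact_mod_cast hk1) (by exact_mod_cast hkN) hcount'
    _ = N + C * N * ∑ k ∈ Icc 1 N, (k : ℝ)⁻¹ := by rw [mul_sum]
    _ ≤ N + C * N * (1 + Real.log N) := by gcongr
    _ ≤ (1 + C) * N * (1 + Real.log N) := by
        nlinarith [Real.log_natCast_nonneg N, (Nat.cast_nonneg N : (0 : ℝ) ≤ N)]

/-- If `N` points `x₁, …, x_N` in a metric space satisfy the counting bound
`#{i : ρ(x_i,η) ≤ s} ≤ C·N·s^D` for all `η` and all `N^(-1/D) ≤ s ≤ 1`, then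
`Σ_i min(N, ρ(x_i,η)^(-D)) ≤ (1+C)·N·(1 + log N)` for every `η`. -/
theorem sum_min_rpow_le
    {Z : Type*} [MetricSpace Z] (D C : ℝ) (hD : 0 < D) (hC : 0 < C)
    (N : ℕ) (hN : 0 < N) (x : Fin N → Z)
    (hcount : ∀ (η : Z) (s : ℝ), (N : ℝ) ^ (-(1 / D)) ≤ s → s ≤ 1 →
      (Nat.card {i : Fin N // dist (x i) η ≤ s} : ℝ) ≤ C * N * s ^ D) :
    ∀ η : Z, ∑ i : Fin N, min (N : ℝ) (dist (x i) η ^ (-D)) ≤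
      (1 + C) * N * (1 + Real.log N) :=
  sum_min_rpow_le_general D C hD hC N x hcount
end

section
/- Let Γ be a group equipped with a left-invariant metric d; write |g| = d(1,g) and (x,y)_w = (d(x,w) + d(y,w) − d(x,y))/2 for the Gromov product. Assume: (i) there is δ ≥ 0 such that (x,y)_w ≥ min((x,z)_w, (y,z)_w) − δ for all x, y, z, w ∈ Γ; (ii) there is K ≥ 0 such that any two points x, y ∈ Γ are joined by a K-rough geodesic, i.e. a map γ : [0, d(x,y)] → Γ with γ(0) = x, γ(d(x,y)) = y and |d(γ(s),γ(t)) − |s−t|| ≤ K for all s, t; (iii) the ball B(1,r) = {g ∈ Γ : |g| ≤ r} is finite for every r > 0; (iv) there are a > 0 and α > 0 such that #B(1,R) ≥ a·e^{αR} for all R ≥ 0. Then there exists τ > 0 such that for every g₀, h ∈ Γ there is g ∈ Γ with d(g,g₀) ≤ τ and |gh| ≥ |g| + |h| − 2τ. -/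
/-!
Suppose every `g` within `τ` of `g₀` cancels more than `τ` against `h`, i.e. `(g⁻¹, h)₁ > τ`.
Writing `g = g₀ u` with `|u| ≤ τ`, hyperbolicity splits the ball `B(τ)` into the smaller ball
`B(τ - c)`, the elements with `(u, g₀⁻¹)₁ ≥ c`, and the inverses of elements with `(v, h)₁ ≥ c`.
A set of points whose pairwise Gromov products are at least `T` is, after projecting each point to
its rough geodesic from `1` at distance `T`, covered by `#B(4K + 4δ)` translates of `B(R - T + K)`.
This gives `#B(τ) ≤ M · #B(τ - β)` for a constant `M`, whereas exponential growth provides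
arbitrarily large `τ` with `#B(τ) > M · #B(τ - β)` as soon as `M < exp (α β)`.
-/

open Metric Set Real

section MetricSpace

variable {X : Type*} [PseudoMetricSpace X]

noncomputable def gromovProduct (w x y : X) : ℝ := (dist x w + dist y w - dist x y) / 2

lemma gromovProduct_comm (w x y : X) : gromovProduct w x y = gromovProduct w y x := by
  simp only [gromovProduct, dist_comm x y, add_comm (dist x w)]

lemma gromovProduct_self (w x : X) : gromovProduct w x x = dist x w := by
  simp [gromovProduct]

lemma gromovProduct_add_gromovProduct (w x y : X) :
    gromovProduct w x y + gromovProduct x w y = dist x w := by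
  simp only [gromovProduct, dist_comm w x, dist_comm y x, dist_comm w y]
  ring

def IsGromovHyperbolic (δ : ℝ) (X : Type*) [PseudoMetricSpace X] : Prop :=
  ∀ x y z w : X, min (gromovProduct w x z) (gromovProduct w y z) - δ ≤ gromovProduct w x y

lemma IsGromovHyperbolic.sub_le_gromovProduct {δ T : ℝ} (hX : IsGromovHyperbolic δ X)
    {w x y z : X} (hx : T ≤ gromovProduct w x z) (hy : T ≤ gromovProduct w y z) :
    T - δ ≤ gromovProduct w x y := by
  linarith [hX x y z w, le_min hx hy]

lemma IsGromovHyperbolic.nonneg {δ : ℝ} [Nonempty X] (hX : IsGromovHyperbolic δ X) : 0 ≤ δ := by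
  obtain ⟨w⟩ := ‹Nonempty X›
  simpa [gromovProduct] using hX w w w w

def IsRoughGeodesic (K : ℝ) (γ : ℝ → X) (x y : X) : Prop :=
  γ 0 = x ∧ γ (dist x y) = y ∧ ∀ s ∈ Icc 0 (dist x y), ∀ t ∈ Icc 0 (dist x y),
    abs (dist (γ s) (γ t) - abs (s - t)) ≤ K

namespace IsRoughGeodesic

variable {K t : ℝ} {γ : ℝ → X} {x y : X}

lemma abs_dist_apply_sub_le (hγ : IsRoughGeodesic K γ x y) (ht : t ∈ Icc 0 (dist x y)) :
    |dist x (γ t) - t| ≤ K := by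
  obtain ⟨h0, -, hK⟩ := hγ
  simpa [h0, abs_of_nonneg ht.1] using hK 0 ⟨le_rfl, dist_nonneg⟩ t ht

lemma dist_apply_le (hγ : IsRoughGeodesic K γ x y) (ht : t ∈ Icc 0 (dist x y)) :
    dist (γ t) y ≤ dist x y - t + K := by
  obtain ⟨-, h1, hK⟩ := hγ
  have := hK t ht (dist x y) ⟨dist_nonneg, le_rfl⟩
  rw [h1, abs_of_nonpos (sub_nonpos.2 ht.2), abs_le] at this
  linarith [this.2]

end IsRoughGeodesic

/-- Points near the rough geodesics from `w` to `x` and to `y`, at distance about `T ≤ (x, y)_w`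
from `w`, fellow-travel. -/
lemma dist_le_of_le_gromovProduct {δ K T : ℝ} (hX : IsGromovHyperbolic δ X) {w x y p q : X}
    (hxy : T ≤ gromovProduct w x y)
    (hp : |dist w p - T| ≤ K) (hpx : dist p x ≤ dist w x - T + K)
    (hq : |dist w q - T| ≤ K) (hqy : dist q y ≤ dist w y - T + K) :
    dist p q ≤ 4 * K + 4 * δ := by
  rw [abs_le] at hp hq
  have hpx' : T - K ≤ gromovProduct w p x := by
    simp only [gromovProduct, dist_comm p w, dist_comm x w]; linarith
  have hqy' : T - K ≤ gromovProduct w q y := by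
    simp only [gromovProduct, dist_comm q w, dist_comm y w]; linarith
  have hpy : T - K - δ ≤ gromovProduct w p y :=
    hX.sub_le_gromovProduct hpx' (by rw [gromovProduct_comm]; linarith)
  have hpq : T - K - 2 * δ ≤ gromovProduct w p q := by
    have : Nonempty X := ⟨w⟩
    have := hX.sub_le_gromovProduct hpy (hqy'.trans' (by linarith [hX.nonneg]))
    linarith
  simp only [gromovProduct, dist_comm p w, dist_comm q w] at hpq
  linarith

end MetricSpace

section Group

variable {Γ : Type*} [Group Γ] [PseudoMetricSpace Γ] [IsIsometricSMul Γ Γ]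

lemma dist_inv_mul_one (g x : Γ) : dist (g⁻¹ * x) 1 = dist x g := by
  rw [← dist_mul_left g, mul_inv_cancel_left, mul_one]

lemma dist_inv_one (g : Γ) : dist g⁻¹ 1 = dist 1 g := by
  simpa using dist_inv_mul_one g 1

lemma gromovProduct_mul_left (g w x y : Γ) :
    gromovProduct (g * w) (g * x) (g * y) = gromovProduct w x y := by
  simp only [gromovProduct, dist_mul_left]

lemma gromovProduct_one_inv (g h : Γ) :
    gromovProduct 1 g⁻¹ h = (dist g 1 + dist h 1 - dist (g * h) 1) / 2 := by
  have : dist g⁻¹ h = dist (g * h) 1 := by rw [dist_comm, ← dist_inv_mul_one, inv_inv]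
  rw [gromovProduct, dist_inv_one, dist_comm 1 g, this]

variable {δ K : ℝ}

theorem ncard_le_mul_of_le_gromovProduct (hX : IsGromovHyperbolic δ Γ)
    (hgeo : ∀ x y : Γ, ∃ γ, IsRoughGeodesic K γ x y) (hfin : ∀ r, (closedBall (1 : Γ) r).Finite)
    {A : Set Γ} {R T : ℝ} (hT : 0 ≤ T) (hAR : A ⊆ closedBall 1 R)
    (hA : ∀ x ∈ A, ∀ y ∈ A, T ≤ gromovProduct 1 x y) :
    A.ncard ≤
      (closedBall (1 : Γ) (4 * K + 4 * δ)).ncard * (closedBall (1 : Γ) (R - T + K)).ncard := by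
  rcases A.eq_empty_or_nonempty with rfl | ⟨x₀, hx₀⟩
  · simp
  have hproj : ∀ x ∈ A, ∃ p, |dist 1 p - T| ≤ K ∧ dist p x ≤ dist 1 x - T + K := by
    intro x hx
    have hTx : T ∈ Icc 0 (dist 1 x) :=
      ⟨hT, by simpa [gromovProduct_self, dist_comm] using hA x hx x hx⟩
    obtain ⟨γ, hγ⟩ := hgeo 1 x
    exact ⟨γ T, hγ.abs_dist_apply_sub_le hTx, hγ.dist_apply_le hTx⟩
  choose! p hp hpx using hproj
  rw [← ncard_prod]
  refine ncard_le_ncard_of_injOn (fun x => ((p x₀)⁻¹ * p x, (p x)⁻¹ * x)) ?_ ?_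
    ((hfin _).prod (hfin _))
  · intro x hx
    refine ⟨?_, ?_⟩
    · rw [mem_closedBall, dist_inv_mul_one]
      exact dist_le_of_le_gromovProduct hX (hA x hx x₀ hx₀) (hp x hx) (hpx x hx) (hp x₀ hx₀)
        (hpx x₀ hx₀)
    · rw [mem_closedBall, dist_inv_mul_one, dist_comm]
      linarith [hpx x hx, mem_closedBall'.1 (hAR hx)]
  · intro x _ y _ hxy
    obtain ⟨hpxy, hxy⟩ := Prod.mk.inj hxy
    rw [mul_left_cancel hpxy] at hxy
    exact mul_left_cancel hxy

theorem ncard_closedBall_inter_le (hX : IsGromovHyperbolic δ Γ)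
    (hgeo : ∀ x y : Γ, ∃ γ, IsRoughGeodesic K γ x y) (hfin : ∀ r, (closedBall (1 : Γ) r).Finite)
    {R c : ℝ} (hc : δ ≤ c) (z : Γ) :
    (closedBall 1 R ∩ {x | c ≤ gromovProduct 1 x z}).ncard ≤
      (closedBall (1 : Γ) (4 * K + 4 * δ)).ncard * (closedBall (1 : Γ) (R - c + δ + K)).ncard := by
  rw [show R - c + δ + K = R - (c - δ) + K by ring]
  exact ncard_le_mul_of_le_gromovProduct hX hgeo hfin (sub_nonneg.2 hc) inter_subset_left
    fun x hx y hy => hX.sub_le_gromovProduct hx.2 hy.2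

/-- Hyperbolicity at the base point `u`, for the points `1`, `u h` and `g₀⁻¹`. -/
lemma IsGromovHyperbolic.sub_le_gromovProduct_inv (hX : IsGromovHyperbolic δ Γ) {g₀ u h : Γ}
    {T : ℝ} (hu : T ≤ gromovProduct u 1 g₀⁻¹) (hcancel : T ≤ gromovProduct 1 (g₀ * u)⁻¹ h) :
    T - δ ≤ gromovProduct 1 u⁻¹ h := by
  have hleft : gromovProduct 1 u⁻¹ h = gromovProduct u 1 (u * h) := by
    rw [← gromovProduct_mul_left u⁻¹ u 1 (u * h)]
    simp
  have hright : gromovProduct 1 (g₀ * u)⁻¹ h = gromovProduct u (u * h) g₀⁻¹ := by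
    rw [← gromovProduct_mul_left u⁻¹ u, gromovProduct_comm]
    simp
  rw [hleft]
  exact hX.sub_le_gromovProduct hu (hright ▸ hcancel)

open Pointwise in
theorem ncard_closedBall_le_of_lt_gromovProduct (hX : IsGromovHyperbolic δ Γ)
    (hgeo : ∀ x y : Γ, ∃ γ, IsRoughGeodesic K γ x y) (hfin : ∀ r, (closedBall (1 : Γ) r).Finite)
    (hK : 0 ≤ K) {g₀ h : Γ} {τ c : ℝ} (hc : δ ≤ c) (hτ : 3 * c + δ ≤ τ)
    (hcancel : ∀ u ∈ closedBall (1 : Γ) τ, τ < gromovProduct 1 (g₀ * u)⁻¹ h) :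
    (closedBall (1 : Γ) τ).ncard ≤
      (2 * (closedBall (1 : Γ) (4 * K + 4 * δ)).ncard + 1) *
        (closedBall (1 : Γ) (τ - c + δ + K)).ncard := by
  set S : Γ → Set Γ := fun z => closedBall 1 τ ∩ {x | c ≤ gromovProduct 1 x z}
  have hcover : closedBall 1 τ ⊆ closedBall 1 (τ - c + δ + K) ∪ S g₀⁻¹ ∪ (S h)⁻¹ := by
    intro u hu
    by_cases hsmall : dist u 1 ≤ τ - c
    · exact Or.inl (Or.inl (mem_closedBall.2 (by linarith [hX.nonneg (X := Γ)])))
    by_cases hg₀ : c ≤ gromovProduct 1 u g₀⁻¹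
    · exact Or.inl (Or.inr ⟨hu, hg₀⟩)
    refine Or.inr ⟨by rwa [mem_closedBall, dist_inv_one, dist_comm], ?_⟩
    have hsplit := gromovProduct_add_gromovProduct 1 u g₀⁻¹
    have hc₀ : 0 ≤ c := hX.nonneg.trans hc
    have hu' : τ - 2 * c - δ ≤ gromovProduct 1 u⁻¹ h :=
      hX.sub_le_gromovProduct_inv (g₀ := g₀) (by linarith) (by linarith [hcancel u hu])
    show c ≤ gromovProduct 1 u⁻¹ h
    linarith
  set N := (closedBall (1 : Γ) (4 * K + 4 * δ)).ncard
  set Q := (closedBall (1 : Γ) (τ - c + δ + K)).ncard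
  have hS : ∀ z, (S z).ncard ≤ N * Q := fun z => ncard_closedBall_inter_le hX hgeo hfin hc z
  have hfinS : ∀ z, (S z).Finite := fun z => (hfin τ).subset inter_subset_left
  calc (closedBall (1 : Γ) τ).ncard
      ≤ (closedBall 1 (τ - c + δ + K) ∪ S g₀⁻¹ ∪ (S h)⁻¹).ncard :=
        ncard_le_ncard hcover (((hfin _).union (hfinS _)).union (hfinS _).inv)
    _ ≤ Q + (S g₀⁻¹).ncard + (S h)⁻¹.ncard :=
        (ncard_union_le _ _).trans (Nat.add_le_add_right (ncard_union_le _ _) _)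
    _ ≤ Q + N * Q + N * Q := by
        rw [ncard_inv]
        gcongr <;> exact hS _
    _ = (2 * N + 1) * Q := by ring

end Group

theorem exists_mul_lt_of_exp_le {f : ℝ → ℕ} {a α β : ℝ} {M : ℕ} (ha : 0 < a)
    (hf : ∀ r, 0 ≤ r → a * exp (α * r) ≤ f r) (hM₀ : 0 < M) (hM : (M : ℝ) < exp (α * β))
    (hβ : 0 ≤ β) {r₀ : ℝ} (hr₀ : 0 ≤ r₀) : ∃ r, r₀ ≤ r ∧ M * f (r - β) < f r := by
  by_contra! hstep
  have hiter : ∀ k : ℕ, (f (r₀ + k * β) : ℝ) ≤ M ^ k * f r₀ := by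
    intro k
    induction k with
    | zero => simp
    | succ k ih =>
      have := hstep (r₀ + (k + 1 : ℕ) * β) (by nlinarith)
      rw [show r₀ + (k + 1 : ℕ) * β - β = r₀ + k * β by push_cast; ring] at this
      calc (f (r₀ + (k + 1 : ℕ) * β) : ℝ) ≤ M * f (r₀ + k * β) := by exact_mod_cast this
        _ ≤ M * (M ^ k * f r₀) := by gcongr
        _ = M ^ (k + 1) * f r₀ := by ring
  have hM₀' : (0 : ℝ) < M := by exact_mod_cast hM₀
  obtain ⟨k, hk⟩ := pow_unbounded_of_one_lt (f r₀ / (a * exp (α * r₀)))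
    ((one_lt_div hM₀').2 hM)
  have hgrowth : a * exp (α * r₀) * exp (α * β) ^ k ≤ M ^ k * f r₀ := by
    calc a * exp (α * r₀) * exp (α * β) ^ k = a * exp (α * (r₀ + k * β)) := by
          rw [← exp_nat_mul, mul_assoc, ← exp_add]; ring_nf
      _ ≤ M ^ k * f r₀ := (hf _ (by positivity)).trans (hiter k)
  rw [div_pow, lt_div_iff₀ (pow_pos hM₀' k), div_mul_eq_mul_div, div_lt_iff₀ (by positivity)] at hk
  linarith

/-- Preventing cancellation: in a group `Γ` with a left-invariant hyperbolic metric which is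
roughly geodesic, has finite balls and exponential growth, there is `τ > 0` such that for all
`g₀, h ∈ Γ` there exists `g` with `d(g,g₀) ≤ τ` and `|gh| ≥ |g| + |h| − 2τ`. -/
theorem preventing_cancellation
    {Γ : Type*} [Group Γ] [MetricSpace Γ]
    (hinv : ∀ g x y : Γ, dist (g * x) (g * y) = dist x y)
    (δ : ℝ) (hδ : 0 ≤ δ)
    (hhyp : ∀ x y z w : Γ,
      min ((dist x w + dist z w - dist x z) / 2) ((dist y w + dist z w - dist y z) / 2) - δ ≤
        (dist x w + dist y w - dist x y) / 2)
    (K : ℝ) (hK : 0 ≤ K)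
    (hgeo : ∀ x y : Γ, ∃ γ : ℝ → Γ, γ 0 = x ∧ γ (dist x y) = y ∧
      ∀ s ∈ Set.Icc (0 : ℝ) (dist x y), ∀ t ∈ Set.Icc (0 : ℝ) (dist x y),
        abs (dist (γ s) (γ t) - abs (s - t)) ≤ K)
    (hfin : ∀ r : ℝ, {g : Γ | dist 1 g ≤ r}.Finite)
    (a α : ℝ) (ha : 0 < a) (hα : 0 < α)
    (hgrowth : ∀ R : ℝ, 0 ≤ R → a * Real.exp (α * R) ≤ Nat.card {g : Γ | dist 1 g ≤ R}) :
    ∃ τ : ℝ, 0 < τ ∧ ∀ g₀ h : Γ, ∃ g : Γ, dist g g₀ ≤ τ ∧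
      dist 1 g + dist 1 h - 2 * τ ≤ dist 1 (g * h) := by
  have : IsIsometricSMul Γ Γ := ⟨fun g => Isometry.of_dist_eq (hinv g)⟩
  have hball : ∀ r, {g : Γ | dist 1 g ≤ r} = closedBall 1 r := fun r => by
    ext; simp [dist_comm]
  simp only [hball, Nat.card_coe_set_eq] at hfin hgrowth
  set M : ℕ := 2 * (closedBall (1 : Γ) (4 * K + 4 * δ)).ncard + 1
  have hM₀ : 0 < M := Nat.succ_pos _
  have hM : (M : ℝ) < exp (α * (M / α)) := by
    rw [mul_div_cancel₀ _ hα.ne']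
    exact (lt_add_one _).trans_le (add_one_le_exp _)
  set c := M / α + δ + K
  have hc : 0 < c := by positivity
  obtain ⟨τ, hτ, hlt⟩ := exists_mul_lt_of_exp_le (f := fun r => (closedBall (1 : Γ) r).ncard)
    ha hgrowth hM₀ hM (by positivity) (r₀ := 3 * c + δ) (by positivity)
  refine ⟨τ, by linarith, fun g₀ h => ?_⟩
  by_contra! hfar
  have hcancel : ∀ u ∈ closedBall (1 : Γ) τ, τ < gromovProduct 1 (g₀ * u)⁻¹ h := by
    intro u hu
    have hdist : dist (g₀ * u) g₀ = dist u 1 := by rw [← dist_mul_left g₀ u 1, mul_one]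
    have := hfar (g₀ * u) (hdist.trans_le hu)
    rw [gromovProduct_one_inv, dist_comm _ (1 : Γ), dist_comm h, dist_comm (g₀ * u * h)]
    linarith
  have hbound := ncard_closedBall_le_of_lt_gromovProduct hhyp hgeo hfin hK
    (by linarith [div_pos (Nat.cast_pos.2 hM₀) hα] : δ ≤ c) hτ hcancel
  rw [show τ - c + δ + K = τ - M / α by ring] at hbound
  exact hlt.not_ge hbound
end

section
/- Let (X,ρ_X) be a separable metric space, μ a Borel probability measure on X with full support (i.e. μ(B(x,ε)) > 0 for every x ∈ X and ε > 0), let (Y,ρ_Y) be a complete metric space, and let F : X → Y be a Borel measurable map. Suppose there are C ≥ 0 and α ∈ (0,1] such that ρ_Y(F(ξ),F(η)) ≤ C·ρ_X(ξ,η)^α for (μ⊗μ)-almost every pair (ξ,η) ∈ X × X. Then there exists a map H : X → Y satisfying ρ_Y(H(ξ),H(η)) ≤ C·ρ_X(ξ,η)^α for all ξ, η ∈ X, such that F = H μ-almost everywhere. -/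
/-!
The pointwise Hölder bound holds on the conull set `G` of points `ξ` for which it holds against
almost every `η`: for `ξ, η ∈ G` the bound against a common third point `ζ` holds for a.e. `ζ`,
hence for `ζ` arbitrarily close to `ξ` because `μ` charges every ball, and letting `ζ → ξ`
gives it for the pair `(ξ, η)`. The same full support makes `G` dense, so `F|G` is uniformly
continuous on a dense set and extends to `X` by completeness of `Y`; the Hölder bound is a closed
condition on pairs and passes to the extension.
-/

open MeasureTheory Filter Metric Set Topology Uniformity

section HolderBound

variable {X Y : Type*} [PseudoMetricSpace X] {C α : ℝ}

theorem tendsto_const_mul_rpow_nhds_zero (C : ℝ) (hα : 0 < α) :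
    Tendsto (fun t : ℝ => C * t ^ α) (𝓝 0) (𝓝 0) := by
  have h := ((Real.continuousAt_rpow_const 0 α (Or.inr hα.le)).tendsto).const_mul C
  rwa [Real.zero_rpow hα.ne', mul_zero] at h

theorem continuous_const_mul_dist_rpow (C : ℝ) (hα : 0 < α) (x : X) :
    Continuous fun y : X => C * dist x y ^ α :=
  continuous_const.mul ((continuous_const.dist continuous_id).rpow_const fun _ => Or.inr hα.le)

variable [PseudoMetricSpace Y]

theorem uniformContinuous_of_dist_le_mul_rpow {f : X → Y} (hα : 0 < α)
    (hf : ∀ x y, dist (f x) (f y) ≤ C * dist x y ^ α) : UniformContinuous f := by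
  have hdist : Tendsto (fun p : X × X => dist p.1 p.2) (𝓤 X) (𝓝 0) :=
    tendsto_uniformity_iff_dist_tendsto_zero.1 tendsto_id
  exact tendsto_uniformity_iff_dist_tendsto_zero.2 <|
    squeeze_zero (fun _ => dist_nonneg) (fun p => hf p.1 p.2)
      ((tendsto_const_mul_rpow_nhds_zero C hα).comp hdist)

theorem isClosed_setOf_dist_le_mul_rpow {f : X → Y} (hf : Continuous f) (C : ℝ) (hα : 0 < α) :
    IsClosed {p : X × X | dist (f p.1) (f p.2) ≤ C * dist p.1 p.2 ^ α} :=
  isClosed_le (by fun_prop)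
    (continuous_const.mul (continuous_dist.rpow_const fun _ => Or.inr hα.le))

theorem Dense.exists_dist_le_mul_rpow_extension [T0Space Y] [CompleteSpace Y]
    {s : Set X} (hs : Dense s) {f : X → Y} (hα : 0 < α)
    (hf : ∀ x ∈ s, ∀ y ∈ s, dist (f x) (f y) ≤ C * dist x y ^ α) :
    ∃ g : X → Y, (∀ x y, dist (g x) (g y) ≤ C * dist x y ^ α) ∧ EqOn g f s := by
  have hrestrict : UniformContinuous (s.domRestrict f) :=
    uniformContinuous_of_dist_le_mul_rpow hα fun x y => hf x x.2 y y.2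
  set g := hs.extend (s.domRestrict f)
  have hext : EqOn g f s := fun x hx => hs.extend_of_ind hrestrict ⟨x, hx⟩
  refine ⟨g, fun x y => ?_, hext⟩
  have hclosed := isClosed_setOf_dist_le_mul_rpow
    (hs.uniformContinuous_extend hrestrict).continuous C hα
  have hsubset : s ×ˢ s ⊆ {p : X × X | dist (g p.1) (g p.2) ≤ C * dist p.1 p.2 ^ α} := by
    rintro ⟨x, y⟩ ⟨hx, hy⟩
    simpa only [mem_ofPred_eq, hext hx, hext hy] using hf x hx y hy
  exact hclosed.closure_subset_iff.2 hsubset ((hs.prod hs).closure_eq ▸ mem_univ (x, y))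

end HolderBound

section FullSupport

variable {X : Type*} [PseudoMetricSpace X] [MeasurableSpace X] {μ : Measure X}

theorem MeasureTheory.Measure.isOpenPosMeasure_of_measure_ball_pos
    (h : ∀ (x : X) (ε : ℝ), 0 < ε → 0 < μ (ball x ε)) : μ.IsOpenPosMeasure where
  open_pos U hU := fun ⟨x, hx⟩ => by
    obtain ⟨ε, hε, hball⟩ := Metric.isOpen_iff.1 hU x hx
    exact ((h x ε hε).trans_le (measure_mono hball)).ne'

theorem dist_le_mul_rpow_of_ae_dist_le_mul_rpow [μ.IsOpenPosMeasure] {Y : Type*}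
    [PseudoMetricSpace Y] {F : X → Y} {C α : ℝ} (hα : 0 < α) {ξ η : X}
    (hξ : ∀ᵐ ζ ∂μ, dist (F ξ) (F ζ) ≤ C * dist ξ ζ ^ α)
    (hη : ∀ᵐ ζ ∂μ, dist (F η) (F ζ) ≤ C * dist η ζ ^ α) :
    dist (F ξ) (F η) ≤ C * dist ξ η ^ α := by
  have hclosed : IsClosed {ζ | dist (F ξ) (F η) ≤ C * dist ξ ζ ^ α + C * dist η ζ ^ α} :=
    isClosed_le continuous_const
      ((continuous_const_mul_dist_rpow C hα ξ).add (continuous_const_mul_dist_rpow C hα η))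
  have hsubset : {ζ | dist (F ξ) (F ζ) ≤ C * dist ξ ζ ^ α ∧ dist (F η) (F ζ) ≤ C * dist η ζ ^ α}
      ⊆ {ζ | dist (F ξ) (F η) ≤ C * dist ξ ζ ^ α + C * dist η ζ ^ α} := fun ζ ⟨h₁, h₂⟩ =>
    (dist_triangle_right _ _ (F ζ)).trans (add_le_add h₁ h₂)
  have hξmem := hclosed.closure_subset_iff.2 hsubset ((μ.dense_of_ae (hξ.and hη)) ξ)
  simpa [Real.zero_rpow hα.ne', dist_comm η ξ] using hξmem

end FullSupport

theorem ae_holder_upgrade_general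
    {X : Type*} [MetricSpace X]
    [MeasurableSpace X]
    {Y : Type*} [MetricSpace Y] [CompleteSpace Y]
    (μ : Measure X) [IsProbabilityMeasure μ]
    (hfull : ∀ (x : X) (ε : ℝ), 0 < ε → 0 < μ (Metric.ball x ε))
    (F : X → Y)
    (C α : ℝ) (hα : 0 < α)
    (hHolder : ∀ᵐ p ∂(μ.prod μ), dist (F p.1) (F p.2) ≤ C * dist p.1 p.2 ^ α) :
    ∃ H : X → Y, (∀ ξ η : X, dist (H ξ) (H η) ≤ C * dist ξ η ^ α) ∧ F =ᵐ[μ] H := by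
  have := Measure.isOpenPosMeasure_of_measure_ball_pos hfull
  set G : Set X := {ξ | ∀ᵐ η ∂μ, dist (F ξ) (F η) ≤ C * dist ξ η ^ α}
  have hG : ∀ᵐ ξ ∂μ, ξ ∈ G := Measure.ae_ae_of_ae_prod hHolder
  obtain ⟨H, hH, hHF⟩ := (μ.dense_of_ae hG).exists_dist_le_mul_rpow_extension hα
    fun ξ hξ η hη => dist_le_mul_rpow_of_ae_dist_le_mul_rpow hα hξ hη
  exact ⟨H, hH, hG.mono fun ξ hξ => (hHF hξ).symm⟩

/-- A Borel map `F` from a separable metric space with a fully supported probability measure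
to a complete metric space, which is Hölder `(C,α)` almost everywhere on pairs, agrees almost
everywhere with a map `H` that is Hölder `(C,α)` everywhere. -/
theorem ae_holder_upgrade
    {X : Type*} [MetricSpace X] [TopologicalSpace.SeparableSpace X]
    [MeasurableSpace X] [BorelSpace X]
    {Y : Type*} [MetricSpace Y] [CompleteSpace Y] [MeasurableSpace Y] [BorelSpace Y]
    (μ : Measure X) [IsProbabilityMeasure μ]
    (hfull : ∀ (x : X) (ε : ℝ), 0 < ε → 0 < μ (Metric.ball x ε))
    (F : X → Y) (hF : Measurable F)
    (C α : ℝ) (hC : 0 ≤ C) (hα : 0 < α) (hα1 : α ≤ 1)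
    (hHolder : ∀ᵐ p ∂(μ.prod μ), dist (F p.1) (F p.2) ≤ C * dist p.1 p.2 ^ α) :
    ∃ H : X → Y, (∀ ξ η : X, dist (H ξ) (H η) ≤ C * dist ξ η ^ α) ∧ F =ᵐ[μ] H :=
  ae_holder_upgrade_general μ hfull F C α hα hHolder
end

section
/- Let G be a countable group acting by Borel automorphisms on a standard Borel space Ω, and let ν and ν' be equivalent σ-finite Borel measures on Ω, each quasi-invariant under the G-action. Assume both are almost invariant: there exist A ≥ 1 and A' ≥ 1 such that A^{−1} ≤ d(g_*ν)/dν ≤ A holds ν-a.e. for every g ∈ G, and (A')^{−1} ≤ d(g_*ν')/dν' ≤ A' holds ν'-a.e. for every g ∈ G. Assume furthermore that the action of G on (Ω,ν) is ergodic, i.e. every G-invariant Borel subset of Ω is ν-null or ν-conull. Then there exist constants 0 < c ≤ C < ∞ such that c ≤ dν/dν' ≤ C holds ν-almost everywhere. -/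
open MeasureTheory
open scoped ENNReal NNReal Pointwise

/-!
Write `f = dν/dν'`. For each `g`, the chain rule for Radon–Nikodym derivatives gives the cocycle
identity `f ω · d(g_*ν')/dν' (gω) = d(g_*ν)/dν (gω) · f (gω)`, so almost invariance makes `f`
comparable, up to the factor `A A'`, with each of its translates. The set where `f` is at most
some integer `n` is non-null; by ergodicity its `G`-saturation is conull, hence `f ≤ A A' n`
almost everywhere. Exchanging the roles of `ν` and `ν'` bounds `dν'/dν = f⁻¹` in the same way.
-/

theorem ENNReal.le_mul_mul_of_mul_eq {a b x y : ℝ≥0∞} {A A' : ℝ≥0} (h : x * b = a * y)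
    (ha : a ≤ A) (hb₀ : (A' : ℝ≥0∞)⁻¹ ≤ b) (hb : b ≤ A') : x ≤ A * A' * y := by
  have hb0 : b ≠ 0 := ((ENNReal.inv_pos.2 ENNReal.coe_ne_top).trans_le hb₀).ne'
  have hbtop : b ≠ ∞ := ne_top_of_le_ne_top ENNReal.coe_ne_top hb
  calc x = x * b * b⁻¹ := (ENNReal.mul_inv_cancel_right hb0 hbtop).symm
    _ = a * y * b⁻¹ := by rw [h]
    _ ≤ A * y * A' := by gcongr; exact ENNReal.inv_le_iff_inv_le.1 hb₀
    _ = A * A' * y := by ring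

namespace MeasureTheory.Measure

variable {Ω : Type*} [MeasurableSpace Ω] {μ μ' : Measure Ω} [SigmaFinite μ] [SigmaFinite μ']
  {T : Ω → Ω}

theorem rnDeriv_mul_rnDeriv_map_comp (hT : MeasurableEmbedding T) (hμμ' : μ ≪ μ')
    (hTμ : μ.map T ≪ μ) (hTμ' : μ'.map T ≪ μ') :
    ∀ᵐ ω ∂μ', μ.rnDeriv μ' ω * (μ'.map T).rnDeriv μ' (T ω) =
      (μ.map T).rnDeriv μ (T ω) * μ.rnDeriv μ' (T ω) := by
  have : SigmaFinite (μ.map T) := hT.sigmaFinite_map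
  have : SigmaFinite (μ'.map T) := hT.sigmaFinite_map
  have hq : QuasiMeasurePreserving T μ' μ' := ⟨hT.measurable, hTμ'⟩
  filter_upwards [hT.rnDeriv_map μ μ', hq.ae (rnDeriv_mul_rnDeriv (hμμ'.map hT.measurable)),
    hq.ae (rnDeriv_mul_rnDeriv hTμ)] with ω hmap hchain hchain'
  simp only [Pi.mul_apply] at hchain hchain'
  rw [← hmap, hchain, hchain']

theorem rnDeriv_le_mul_rnDeriv_comp (hT : MeasurableEmbedding T) (hμμ' : μ ≪ μ')
    (hTμ : μ.map T ≪ μ) (hTμ' : μ'.map T ≪ μ') {A A' : ℝ≥0}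
    (ha : ∀ᵐ x ∂μ', (μ.map T).rnDeriv μ x ≤ A)
    (hb : ∀ᵐ x ∂μ', (A'⁻¹ : ℝ≥0∞) ≤ (μ'.map T).rnDeriv μ' x ∧ (μ'.map T).rnDeriv μ' x ≤ A') :
    ∀ᵐ ω ∂μ', μ.rnDeriv μ' ω ≤ A * A' * μ.rnDeriv μ' (T ω) := by
  have hq : QuasiMeasurePreserving T μ' μ' := ⟨hT.measurable, hTμ'⟩
  filter_upwards [rnDeriv_mul_rnDeriv_map_comp hT hμμ' hTμ hTμ', hq.ae ha, hq.ae hb]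
    with ω hcocycle haω hbω
  exact ENNReal.le_mul_mul_of_mul_eq hcocycle haω hbω.1 hbω.2

end MeasureTheory.Measure

theorem exists_nat_measure_setOf_le_ne_zero {Ω : Type*} [MeasurableSpace Ω] {ν : Measure Ω}
    (hν : ν ≠ 0) {f : Ω → ℝ≥0∞} (hf : ∀ᵐ ω ∂ν, f ω ≠ ∞) : ∃ n : ℕ, ν {ω | f ω ≤ n} ≠ 0 := by
  have hcover : ∀ᵐ ω ∂ν, ω ∈ ⋃ n : ℕ, {ω | f ω ≤ n} := hf.mono fun ω hω =>
    Set.mem_iUnion.2 <| (ENNReal.exists_nat_gt hω).imp fun _ hn => hn.le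
  have hunion : ν (⋃ n : ℕ, {ω | f ω ≤ n}) ≠ 0 := by
    rwa [measure_congr (ae_eq_univ.2 (ae_iff.1 hcover)), Ne, Measure.measure_univ_eq_zero]
  obtain ⟨n, hn⟩ := exists_measure_pos_of_not_measure_iUnion_null hunion
  exact ⟨n, hn.ne'⟩

section Ergodic

variable {G Ω : Type*} [Group G] [MulAction G Ω] [MeasurableSpace Ω] {ν : Measure Ω}

theorem measurableEmbedding_smul_of_measurable (hmeas : ∀ g : G, Measurable fun ω : Ω => g • ω)
    (g : G) : MeasurableEmbedding fun ω : Ω => g • ω :=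
  (MeasurableEquiv.mk (MulAction.toPerm g) (hmeas g) (hmeas g⁻¹)).measurableEmbedding

variable [Countable G] (hmeas : ∀ g : G, Measurable fun ω : Ω => g • ω)
  (herg : ∀ S : Set Ω, MeasurableSet S → (∀ g : G, g • S = S) → ν S = 0 ∨ ν Sᶜ = 0)
include hmeas herg

theorem ae_exists_smul_mem_of_ergodic {E : Set Ω} (hE : MeasurableSet E) (hνE : ν E ≠ 0) :
    ∀ᵐ ω ∂ν, ∃ g : G, g • ω ∈ E := by
  set S : Set Ω := {ω | ∃ g : G, g • ω ∈ E}
  have hS : MeasurableSet S := by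
    have hSE : S = ⋃ g : G, (fun ω => g • ω) ⁻¹' E := by ext; simp [S]
    exact hSE ▸ MeasurableSet.iUnion fun g => hmeas g hE
  have hSinv : ∀ h : G, h • S = S := fun h => by
    ext ω
    simp only [S, Set.mem_smul_set_iff_inv_smul_mem, Set.mem_ofPred_eq, smul_smul]
    exact ⟨fun ⟨g, hg⟩ => ⟨_, hg⟩, fun ⟨g, hg⟩ => ⟨g * h, by rwa [mul_inv_cancel_right]⟩⟩
  refine (herg S hS hSinv).resolve_left fun hS0 => hνE (measure_mono_null ?_ hS0)
  exact fun ω hω => ⟨1, by rwa [one_smul]⟩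

theorem ae_le_of_ergodic_of_ae_le_mul_smul (hν : ν ≠ 0) {f : Ω → ℝ≥0∞} (hf : Measurable f)
    (hfin : ∀ᵐ ω ∂ν, f ω ≠ ∞) {K : ℝ≥0} (hK : ∀ᵐ ω ∂ν, ∀ g : G, f ω ≤ K * f (g • ω)) :
    ∃ C : ℝ≥0, ∀ᵐ ω ∂ν, f ω ≤ C := by
  obtain ⟨n, hn⟩ := exists_nat_measure_setOf_le_ne_zero hν hfin
  refine ⟨K * n, ?_⟩
  filter_upwards [hK, ae_exists_smul_mem_of_ergodic hmeas herg
    (measurableSet_le hf measurable_const) hn] with ω hω ⟨g, hg⟩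
  calc f ω ≤ K * f (g • ω) := hω g
    _ ≤ K * n := by gcongr
    _ = (K * n : ℝ≥0) := by norm_cast

end Ergodic

theorem almost_invariant_ergodic_rnDeriv_bounded_general
    {G : Type*} [Group G] [Countable G]
    {Ω : Type*} [MeasurableSpace Ω]
    [MulAction G Ω] (hmeas : ∀ g : G, Measurable fun ω : Ω => g • ω)
    (ν ν' : Measure Ω) [SigmaFinite ν] [SigmaFinite ν']
    (hequiv : ν ≪ ν' ∧ ν' ≪ ν)
    (hqi : ∀ g : G, ν.map (fun ω => g • ω) ≪ ν)
    (hqi' : ∀ g : G, ν'.map (fun ω => g • ω) ≪ ν')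
    (A : ℝ≥0)
    (hai : ∀ g : G, ∀ᵐ ω ∂ν,
      (A⁻¹ : ℝ≥0∞) ≤ (ν.map (fun ω => g • ω)).rnDeriv ν ω ∧
        (ν.map (fun ω => g • ω)).rnDeriv ν ω ≤ (A : ℝ≥0∞))
    (A' : ℝ≥0)
    (hai' : ∀ g : G, ∀ᵐ ω ∂ν',
      (A'⁻¹ : ℝ≥0∞) ≤ (ν'.map (fun ω => g • ω)).rnDeriv ν' ω ∧
        (ν'.map (fun ω => g • ω)).rnDeriv ν' ω ≤ (A' : ℝ≥0∞))
    (herg : ∀ S : Set Ω, MeasurableSet S → (∀ g : G, g • S = S) →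
      ν S = 0 ∨ ν Sᶜ = 0) :
    ∃ c C : ℝ≥0, 0 < c ∧ c ≤ C ∧
      ∀ᵐ ω ∂ν, (c : ℝ≥0∞) ≤ ν.rnDeriv ν' ω ∧ ν.rnDeriv ν' ω ≤ (C : ℝ≥0∞) := by
  obtain ⟨hνν', hν'ν⟩ := hequiv
  rcases eq_or_ne ν 0 with rfl | hν
  · exact ⟨1, 1, one_pos, le_rfl, by simp⟩
  have hT := measurableEmbedding_smul_of_measurable hmeas
  obtain ⟨C, hC⟩ := ae_le_of_ergodic_of_ae_le_mul_smul hmeas herg hν (ν.measurable_rnDeriv ν')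
    (hνν'.ae_le (ν.rnDeriv_ne_top ν')) <| ae_all_iff.2 fun g => hνν'.ae_le <|
      Measure.rnDeriv_le_mul_rnDeriv_comp (hT g) hνν' (hqi g) (hqi' g)
        (hν'ν.ae_le ((hai g).mono fun _ h => h.2)) (hai' g)
  obtain ⟨D, hD⟩ := ae_le_of_ergodic_of_ae_le_mul_smul hmeas herg hν (ν'.measurable_rnDeriv ν)
    (ν'.rnDeriv_ne_top ν) <| ae_all_iff.2 fun g =>
      Measure.rnDeriv_le_mul_rnDeriv_comp (hT g) hν'ν (hqi' g) (hqi g)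
        (hνν'.ae_le ((hai' g).mono fun _ h => h.2)) (hai g)
  refine ⟨(max D 1)⁻¹, max C 1, by positivity,
    (inv_le_one_of_one_le₀ (le_max_right _ _)).trans (le_max_right _ _), ?_⟩
  filter_upwards [hC, hD, Measure.inv_rnDeriv hνν'] with ω hCω hDω hinv
  refine ⟨?_, hCω.trans (by simp)⟩
  rw [ENNReal.coe_inv (by positivity), ENNReal.inv_le_iff_inv_le, ← Pi.inv_apply, hinv]
  exact hDω.trans (by simp)

/-- If two equivalent σ-finite measures `ν, ν'` on a standard Borel space are almost invariant
under a Borel action of a countable group `G` (Radon–Nikodym derivatives of all translates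
uniformly bounded between positive constants), and the action is ergodic with respect to `ν`,
then the Radon–Nikodym derivative `dν/dν'` is bounded between two positive constants a.e. -/
theorem almost_invariant_ergodic_rnDeriv_bounded
    {G : Type*} [Group G] [Countable G]
    {Ω : Type*} [MeasurableSpace Ω] [StandardBorelSpace Ω]
    [MulAction G Ω] (hmeas : ∀ g : G, Measurable fun ω : Ω => g • ω)
    (ν ν' : Measure Ω) [SigmaFinite ν] [SigmaFinite ν']
    (hequiv : ν ≪ ν' ∧ ν' ≪ ν)
    (hqi : ∀ g : G, ν.map (fun ω => g • ω) ≪ ν)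
    (hqi' : ∀ g : G, ν'.map (fun ω => g • ω) ≪ ν')
    (A : ℝ≥0) (hA : 1 ≤ A)
    (hai : ∀ g : G, ∀ᵐ ω ∂ν,
      (A⁻¹ : ℝ≥0∞) ≤ (ν.map (fun ω => g • ω)).rnDeriv ν ω ∧
        (ν.map (fun ω => g • ω)).rnDeriv ν ω ≤ (A : ℝ≥0∞))
    (A' : ℝ≥0) (hA' : 1 ≤ A')
    (hai' : ∀ g : G, ∀ᵐ ω ∂ν',
      (A'⁻¹ : ℝ≥0∞) ≤ (ν'.map (fun ω => g • ω)).rnDeriv ν' ω ∧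
        (ν'.map (fun ω => g • ω)).rnDeriv ν' ω ≤ (A' : ℝ≥0∞))
    (herg : ∀ S : Set Ω, MeasurableSet S → (∀ g : G, g • S = S) →
      ν S = 0 ∨ ν Sᶜ = 0) :
    ∃ c C : ℝ≥0, 0 < c ∧ c ≤ C ∧
      ∀ᵐ ω ∂ν, (c : ℝ≥0∞) ≤ ν.rnDeriv ν' ω ∧ ν.rnDeriv ν' ω ≤ (C : ℝ≥0∞) :=
  almost_invariant_ergodic_rnDeriv_bounded_general hmeas ν ν' hequiv hqi hqi' A hai A' hai' herg
end
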